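/- (Proposition 2: FIM of the BPSK ISAC parameter vector.) The matrix product J_bpskᵀ · I_η · J_bpsk equals the 4×4 block matrix, with rows and columns each indexed by (Fin L) ⊕ (Fin L) ⊕ (Fin 1) ⊕ (Fin L), whose blocks are: (1,1) = Hᵀ·Λττ·H, (1,2) = 0, (1,3) = 0, (1,4) = Hᵀ·Λτα; (2,1) = 0, (2,2) = 𝔟·Hᵀ·Λφφ·H, (2,3) = 𝔟·Hᵀ·Λφφ·E, (2,4) = 0; (3,1) = 0, (3,2) = 𝔟·Eᵀ·Λφφ·H, (3,3) = 𝔟·Eᵀ·Λφφ·E, (3,4) = 0; (4,1) = Λατ·H, (4,2) = 0, (4,3) = 0, (4,4) = Λαα; where 𝔟 = 2π²·T_f²·N_f·(N_f − 1)·(2N_f − 1)/3. -/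
import Mathlib


open Matrix

noncomputable section

/-- The matrix `H`: first column all ones, agreeing with the identity elsewhere. -/
def Hmat (L : ℕ) : Matrix (Fin L) (Fin L) ℂ :=
  Matrix.of fun i j => if j.val = 0 ∨ i = j then 1 else 0

/-- The all-ones column vector `E` of length `L`. -/
def Emat (L : ℕ) : Matrix (Fin L) (Fin 1) ℂ :=
  Matrix.of fun _ _ => 1

/-- The FIM of the observation vector. -/
def Ieta (L Nf : ℕ) (Λττ Λτα Λατ Λφφ Λαα : Matrix (Fin L) (Fin L) ℂ) :
    Matrix (Fin L ⊕ (Fin Nf × Fin L) ⊕ Fin L) (Fin L ⊕ (Fin Nf × Fin L) ⊕ Fin L) ℂ :=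
  Matrix.of fun i j =>
    match i, j with
    | Sum.inl a, Sum.inl b => Λττ a b
    | Sum.inl a, Sum.inr (Sum.inr b) => Λτα a b
    | Sum.inr (Sum.inr a), Sum.inl b => Λατ a b
    | Sum.inr (Sum.inr a), Sum.inr (Sum.inr b) => Λαα a b
    | Sum.inr (Sum.inl (κ, a)), Sum.inr (Sum.inl (κ', b)) => if κ = κ' then Λφφ a b else 0
    | _, _ => 0

/-- The Jacobian matrix of the BPSK ISAC case: row blocks `[H, 0, 0, 0]` for the delays,
`[0, (2πκT_f)·H, (2πκT_f)·E, 0]` for the phases, `[0, 0, 0, I_L]` for the amplitudes. -/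
def Jbpsk (L Nf : ℕ) (Tf : ℝ) :
    Matrix (Fin L ⊕ (Fin Nf × Fin L) ⊕ Fin L) (Fin L ⊕ Fin L ⊕ Fin 1 ⊕ Fin L) ℂ :=
  Matrix.of fun i j =>
    match i, j with
    | Sum.inl a, Sum.inl b => Hmat L a b
    | Sum.inr (Sum.inl (κ, a)), Sum.inr (Sum.inl b) =>
        ((2 * Real.pi * (κ.1 : ℝ) * Tf : ℝ) : ℂ) * Hmat L a b
    | Sum.inr (Sum.inl (κ, a)), Sum.inr (Sum.inr (Sum.inl b)) =>
        ((2 * Real.pi * (κ.1 : ℝ) * Tf : ℝ) : ℂ) * Emat L a b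
    | Sum.inr (Sum.inr a), Sum.inr (Sum.inr (Sum.inr b)) => (1 : Matrix (Fin L) (Fin L) ℂ) a b
    | _, _ => 0

lemma sumsq (n : ℕ) : ∑ κ : Fin n, ((κ:ℕ) : ℝ)^2 = n*(n-1)*(2*n-1)/6 := by
  induction n with
  | zero => simp
  | succ m ih =>
    rw [Fin.sum_univ_castSucc]
    simp only [Fin.coe_castSucc, Fin.val_last, ih]
    push_cast
    ring

lemma sumsqC (n : ℕ) : ∑ κ : Fin n, ((κ:ℕ) : ℂ)^2 = n*(n-1)*(2*n-1)/6 := by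
  exact_mod_cast congrArg (Complex.ofReal) (sumsq n)

lemma phase_block {L Nf : ℕ} (Tf : ℝ) (Λ : Matrix (Fin L) (Fin L) ℂ) (u v : Fin L → ℂ) :
    ∑ x : Fin Nf, ∑ x1 : Fin L,
        (∑ x2 : Fin L, 2 * (Real.pi:ℂ) * ((x:ℕ):ℂ) * (Tf:ℂ) * u x2 * Λ x2 x1) *
          (2 * (Real.pi:ℂ) * ((x:ℕ):ℂ) * (Tf:ℂ) * v x1) =
    2 * (Real.pi:ℂ)^2 * (Tf:ℂ)^2 * (Nf:ℂ) * ((Nf:ℂ) - 1) * (2*(Nf:ℂ) - 1) / 3 *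
      ∑ x1 : Fin L, (∑ x2 : Fin L, u x2 * Λ x2 x1) * v x1 := by
  have key : ∀ x : Fin Nf, ∑ x1 : Fin L,
      (∑ x2 : Fin L, 2 * (Real.pi:ℂ) * ((x:ℕ):ℂ) * (Tf:ℂ) * u x2 * Λ x2 x1) *
        (2 * (Real.pi:ℂ) * ((x:ℕ):ℂ) * (Tf:ℂ) * v x1) =
      ((x:ℕ):ℂ)^2 * (4 * (Real.pi:ℂ)^2 * (Tf:ℂ)^2 *
        ∑ x1 : Fin L, (∑ x2 : Fin L, u x2 * Λ x2 x1) * v x1) := by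
    intro x
    simp only [Finset.mul_sum, Finset.sum_mul]
    refine Finset.sum_congr rfl fun x1 _ => Finset.sum_congr rfl fun x2 _ => by ring
  rw [Finset.sum_congr rfl fun x _ => key x, ← Finset.sum_mul, sumsqC]
  ring

set_option maxHeartbeats 2000000

/-- Proposition 2: the FIM of the BPSK ISAC parameter vector. -/
theorem fim_bpsk (L Nf : ℕ) (hL : 1 ≤ L) (Tf : ℝ)
    (Λττ Λτα Λατ Λφφ Λαα : Matrix (Fin L) (Fin L) ℂ) :
    (Jbpsk L Nf Tf)ᵀ * Ieta L Nf Λττ Λτα Λατ Λφφ Λαα * Jbpsk L Nf Tf =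
      Matrix.of (fun (i j : Fin L ⊕ Fin L ⊕ Fin 1 ⊕ Fin L) =>
        match i, j with
        | Sum.inl a, Sum.inl b => ((Hmat L)ᵀ * Λττ * Hmat L) a b
        | Sum.inl _, Sum.inr (Sum.inl _) => 0
        | Sum.inl _, Sum.inr (Sum.inr (Sum.inl _)) => 0
        | Sum.inl a, Sum.inr (Sum.inr (Sum.inr b)) => ((Hmat L)ᵀ * Λτα) a b
        | Sum.inr (Sum.inl _), Sum.inl _ => 0
        | Sum.inr (Sum.inl a), Sum.inr (Sum.inl b) =>
            ((2 * Real.pi ^ 2 * Tf ^ 2 * (Nf : ℝ) * ((Nf : ℝ) - 1) * (2 * (Nf : ℝ) - 1) / 3 : ℝ) : ℂ) *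
              ((Hmat L)ᵀ * Λφφ * Hmat L) a b
        | Sum.inr (Sum.inl a), Sum.inr (Sum.inr (Sum.inl b)) =>
            ((2 * Real.pi ^ 2 * Tf ^ 2 * (Nf : ℝ) * ((Nf : ℝ) - 1) * (2 * (Nf : ℝ) - 1) / 3 : ℝ) : ℂ) *
              ((Hmat L)ᵀ * Λφφ * Emat L) a b
        | Sum.inr (Sum.inl _), Sum.inr (Sum.inr (Sum.inr _)) => 0
        | Sum.inr (Sum.inr (Sum.inl _)), Sum.inl _ => 0
        | Sum.inr (Sum.inr (Sum.inl a)), Sum.inr (Sum.inl b) =>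
            ((2 * Real.pi ^ 2 * Tf ^ 2 * (Nf : ℝ) * ((Nf : ℝ) - 1) * (2 * (Nf : ℝ) - 1) / 3 : ℝ) : ℂ) *
              ((Emat L)ᵀ * Λφφ * Hmat L) a b
        | Sum.inr (Sum.inr (Sum.inl a)), Sum.inr (Sum.inr (Sum.inl b)) =>
            ((2 * Real.pi ^ 2 * Tf ^ 2 * (Nf : ℝ) * ((Nf : ℝ) - 1) * (2 * (Nf : ℝ) - 1) / 3 : ℝ) : ℂ) *
              ((Emat L)ᵀ * Λφφ * Emat L) a b
        | Sum.inr (Sum.inr (Sum.inl _)), Sum.inr (Sum.inr (Sum.inr _)) => 0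
        | Sum.inr (Sum.inr (Sum.inr a)), Sum.inl b => (Λατ * Hmat L) a b
        | Sum.inr (Sum.inr (Sum.inr _)), Sum.inr (Sum.inl _) => 0
        | Sum.inr (Sum.inr (Sum.inr _)), Sum.inr (Sum.inr (Sum.inl _)) => 0
        | Sum.inr (Sum.inr (Sum.inr a)), Sum.inr (Sum.inr (Sum.inr b)) => Λαα a b) := by
  ext i j
  rcases i with a | a | a | a <;> rcases j with b | b | b | b <;>
  · simp only [Matrix.mul_apply, Matrix.transpose_apply, Jbpsk, Ieta, Matrix.of_apply,
      Fintype.sum_sum_type, Fintype.sum_prod_type, Matrix.one_apply]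
    simp
    try exact phase_block Tf Λφφ _ _
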